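/- Let 𝔤 be the 4-dimensional real Lie algebra with basis X₁, X₂, Y₁, Y₂ whose only nonvanishing brackets among basis elements are [X₁, X₂] = Y₂ and [X₁, Y₂] = Y₁. Let Ω be the alternating bilinear form with Ω(X₁,Y₁) = Ω(X₂,Y₂) = 1 and Ω vanishing on all other pairs of distinct basis elements, and let j be the linear map with jX_i = Y_i and jY_i = −X_i (i = 1, 2). Then Ω is a nondegenerate 2-cocycle, j is a positive compatible complex structure, the span of the image of N^j equals span{X₁ − Y₂, X₂ + Y₁}, this span is not involutive, its Ω-orthogonal complement equals span{X₂ − Y₁, X₁ + Y₂}, and that complement is not involutive. -/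

import Mathlib

/-- The algebraic Nijenhuis tensor of a linear map `j` on a Lie algebra. -/
def algNijenhuis {𝔤 : Type*} [LieRing 𝔤] [LieAlgebra ℝ 𝔤] (j : 𝔤 →ₗ[ℝ] 𝔤) (X Y : 𝔤) : 𝔤 :=
  ⁅j X, j Y⁆ - j ⁅j X, Y⁆ - j ⁅X, j Y⁆ - ⁅X, Y⁆

/-- A subspace `W` of a Lie algebra is involutive if `⁅W, W⁆ ⊆ W`. -/
def IsInvolutive {𝔤 : Type*} [LieRing 𝔤] [LieAlgebra ℝ 𝔤] (W : Set 𝔤) : Prop :=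
  ∀ u ∈ W, ∀ v ∈ W, ⁅u, v⁆ ∈ W

/-!
Transport everything along the coordinates `b.equivFun : 𝔤 ≃ ℝ⁴`, where
`X₁, X₂, Y₁, Y₂ = b 0, b 1, b 2, b 3`: the bracket, `Ω` and `j` become explicit polynomial maps
and every claim becomes a polynomial identity. In these coordinates `Ω(X, jX)` is the sum of the
squares of the coordinates of `X`, which gives positivity and, with `Y = jX`, nondegeneracy; and `N^j(X, Y) = p (X₁ - Y₂) + q (X₂ + Y₁)` for two
explicit bilinear coefficients `p, q`. Neither plane is involutive since
`⁅X₁ - Y₂, X₂ + Y₁⁆ = Y₂` and `⁅X₂ - Y₁, X₁ + Y₂⁆ = -Y₂`, while the coordinate functional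
`x₁ + y₂`, resp. `x₁ - y₂`, vanishes on the plane but not on `Y₂`.
-/

open Module Submodule

theorem Module.Basis.sum_sq_equivFun_pos {ι R M : Type*} [Fintype ι] [Field R]
    [LinearOrder R] [IsStrictOrderedRing R] [AddCommGroup M] [Module R M] (b : Basis ι R M)
    {x : M} (hx : x ≠ 0) :
    0 < ∑ i, b.equivFun x i ^ 2 := by
  obtain ⟨i, hi⟩ : ∃ i, b.equivFun x i ≠ 0 := by
    by_contra! h
    exact hx (b.equivFun.injective (by ext i; simp [h i]))
  exact Finset.sum_pos' (fun i _ => sq_nonneg _) ⟨i, Finset.mem_univ i, by positivity⟩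

theorem LinearMap.forall_mem_span_pair_eq_zero_iff {R M : Type*} [CommRing R] [AddCommGroup M]
    [Module R M] (f : M →ₗ[R] R) (u v : M) :
    (∀ w ∈ span R {u, v}, f w = 0) ↔ f u = 0 ∧ f v = 0 :=
  (span_le (p := LinearMap.ker f)).trans (by simp [Set.pair_subset_iff])

theorem LinearMap.notMem_span_pair {R M : Type*} [CommRing R] [AddCommGroup M] [Module R M]
    (f : M →ₗ[R] R) {u v w : M} (hu : f u = 0) (hv : f v = 0) (hw : f w ≠ 0) :
    w ∉ span R {u, v} :=
  fun h => hw ((f.forall_mem_span_pair_eq_zero_iff u v).2 ⟨hu, hv⟩ w h)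

theorem not_isInvolutive_span_pair {𝔤 : Type*} [LieRing 𝔤] [LieAlgebra ℝ 𝔤] {u v : 𝔤}
    (h : ⁅u, v⁆ ∉ span ℝ {u, v}) : ¬ IsInvolutive (span ℝ {u, v} : Set 𝔤) :=
  fun hW => h (hW u (subset_span (by simp)) v (subset_span (by simp)))

namespace Filiform4

variable {𝔤 : Type*} [LieRing 𝔤] [LieAlgebra ℝ 𝔤] (b : Basis (Fin 4) ℝ 𝔤)
  {Ω : 𝔤 →ₗ[ℝ] 𝔤 →ₗ[ℝ] ℝ} {j : 𝔤 →ₗ[ℝ] 𝔤}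
  (hbr : ∀ i k : Fin 4, ⁅b i, b k⁆ =
    if i = 0 ∧ k = 1 then b 3 else if i = 1 ∧ k = 0 then -(b 3) else
    if i = 0 ∧ k = 3 then b 2 else if i = 3 ∧ k = 0 then -(b 2) else 0)
  (hΩ : ∀ i k : Fin 4, Ω (b i) (b k) = !![0,0,1,0; 0,0,0,1; -1,0,0,0; 0,-1,0,0] i k)
  (hj0 : j (b 0) = b 2) (hj1 : j (b 1) = b 3) (hj2 : j (b 2) = -(b 0)) (hj3 : j (b 3) = -(b 1))

include hbr in
theorem lie_equivFun_symm (x y : Fin 4 → ℝ) :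
    ⁅b.equivFun.symm x, b.equivFun.symm y⁆ =
      b.equivFun.symm ![0, 0, x 0 * y 3 - x 3 * y 0, x 0 * y 1 - x 1 * y 0] := by
  simp only [Basis.equivFun_symm_apply, Fin.sum_univ_four, Fin.isValue, lie_add, lie_smul,
    add_lie, smul_lie, lie_self, smul_zero, hbr, one_ne_zero, zero_ne_one, and_self, ↓reduceIte,
    smul_neg, zero_add, Fin.reduceEq, and_true, add_zero, smul_add, and_false,
    Matrix.cons_val_zero, zero_smul, Matrix.cons_val_one, Matrix.cons_val]
  module

include hΩ in
theorem apply_equivFun_symm (x y : Fin 4 → ℝ) :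
    Ω (b.equivFun.symm x) (b.equivFun.symm y) =
      x 0 * y 2 + x 1 * y 3 - x 2 * y 0 - x 3 * y 1 := by
  simp only [Basis.equivFun_symm_apply, Fin.sum_univ_four, Fin.isValue, map_add, map_smul,
    LinearMap.add_apply, LinearMap.smul_apply, hΩ, Matrix.of_apply, Matrix.cons_val',
    Matrix.cons_val_zero, Matrix.cons_val_fin_one, smul_eq_mul, mul_zero, Matrix.cons_val_one,
    add_zero, Matrix.cons_val, mul_one, zero_add, mul_neg]
  ring

include hj0 hj1 hj2 hj3 in
theorem map_equivFun_symm (x : Fin 4 → ℝ) :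
    j (b.equivFun.symm x) = b.equivFun.symm ![-x 2, -x 3, x 0, x 1] := by
  simp only [Basis.equivFun_symm_apply, Fin.sum_univ_four, Fin.isValue, map_add, map_smul, hj0, hj1,
    hj2, smul_neg, hj3, Matrix.cons_val_zero, neg_smul, Matrix.cons_val_one, Matrix.cons_val]
  module

include hbr hΩ in
theorem apply_lie_cyclic (X Y Z : 𝔤) : Ω ⁅X, Y⁆ Z + Ω ⁅Y, Z⁆ X + Ω ⁅Z, X⁆ Y = 0 := by
  obtain ⟨x, rfl⟩ := b.equivFun.symm.surjective X
  obtain ⟨y, rfl⟩ := b.equivFun.symm.surjective Y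
  obtain ⟨z, rfl⟩ := b.equivFun.symm.surjective Z
  simp only [lie_equivFun_symm b hbr, apply_equivFun_symm b hΩ, Fin.isValue, Matrix.cons_val_zero,
    Matrix.cons_val_one, Matrix.cons_val]
  ring

include hj0 hj1 hj2 hj3 in
theorem map_map (X : 𝔤) : j (j X) = -X := by
  obtain ⟨x, rfl⟩ := b.equivFun.symm.surjective X
  rw [map_equivFun_symm b hj0 hj1 hj2 hj3, map_equivFun_symm b hj0 hj1 hj2 hj3, ← map_neg]
  congr 1
  ext i
  fin_cases i <;> simp

include hΩ hj0 hj1 hj2 hj3 in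
theorem apply_map_map (X Y : 𝔤) : Ω (j X) (j Y) = Ω X Y := by
  obtain ⟨x, rfl⟩ := b.equivFun.symm.surjective X
  obtain ⟨y, rfl⟩ := b.equivFun.symm.surjective Y
  simp only [map_equivFun_symm b hj0 hj1 hj2 hj3, apply_equivFun_symm b hΩ, Fin.isValue,
    Matrix.cons_val_zero, Matrix.cons_val_one, Matrix.cons_val]
  ring

include hΩ hj0 hj1 hj2 hj3 in
theorem apply_map_self_eq_sum_sq (X : 𝔤) : Ω X (j X) = ∑ i, b.equivFun X i ^ 2 := by
  obtain ⟨x, rfl⟩ := b.equivFun.symm.surjective X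
  rw [map_equivFun_symm b hj0 hj1 hj2 hj3, apply_equivFun_symm b hΩ, LinearEquiv.apply_symm_apply,
    Fin.sum_univ_four]
  simp only [Fin.isValue, Matrix.cons_val_zero, Matrix.cons_val_one, Matrix.cons_val]
  ring

include hbr hj0 hj1 hj2 hj3 in
theorem algNijenhuis_equivFun_symm (x y : Fin 4 → ℝ) :
    algNijenhuis j (b.equivFun.symm x) (b.equivFun.symm y) =
      (x 0 * y 1 - x 1 * y 0 - x 2 * y 3 + x 3 * y 2) • (b 0 - b 3) +
      (x 3 * y 0 - x 0 * y 3 + x 1 * y 2 - x 2 * y 1) • (b 1 + b 2) := by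
  simp only [algNijenhuis, map_equivFun_symm b hj0 hj1 hj2 hj3, lie_equivFun_symm b hbr]
  simp only [Basis.equivFun_symm_apply, Fin.sum_univ_four, Fin.isValue, Matrix.cons_val_zero,
    Matrix.cons_val_one, Matrix.cons_val]
  module

include hbr hj0 hj1 hj2 hj3 in
theorem span_algNijenhuis :
    span ℝ {v : 𝔤 | ∃ X Y : 𝔤, v = algNijenhuis j X Y} =
      span ℝ {b 0 - b 3, b 1 + b 2} := by
  refine le_antisymm (span_le.2 ?_) (span_le.2 ?_)
  · rintro _ ⟨X, Y, rfl⟩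
    obtain ⟨x, rfl⟩ := b.equivFun.symm.surjective X
    obtain ⟨y, rfl⟩ := b.equivFun.symm.surjective Y
    rw [algNijenhuis_equivFun_symm b hbr hj0 hj1 hj2 hj3]
    exact add_mem (smul_mem _ _ (subset_span (by simp))) (smul_mem _ _ (subset_span (by simp)))
  · rintro _ (rfl | rfl)
    · exact subset_span ⟨b 0, b 1, by simp [algNijenhuis, hbr, hj0, hj1, hj2]⟩
    · exact subset_span ⟨b 1, b 2, by
      simp only [algNijenhuis, hj1, hj2, hj3, lie_neg, hbr, Fin.reduceEq, zero_ne_one, and_self,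
        ↓reduceIte, and_true, neg_neg, and_false, map_zero, sub_zero, one_ne_zero, sub_neg_eq_add]
      abel⟩

include hbr in
theorem not_isInvolutive_span_sub_add :
    ¬ IsInvolutive (span ℝ {b 0 - b 3, b 1 + b 2} : Set 𝔤) := by
  refine not_isInvolutive_span_pair ?_
  rw [show ⁅b 0 - b 3, b 1 + b 2⁆ = b 3 by simp [sub_lie, lie_add, hbr]]
  exact (b.coord 0 + b.coord 3).notMem_span_pair (by simp) (by simp) (by simp)

include hbr in
theorem not_isInvolutive_orthogonal_span_sub_add :
    ¬ IsInvolutive (span ℝ {b 1 - b 2, b 0 + b 3} : Set 𝔤) := by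
  refine not_isInvolutive_span_pair ?_
  rw [show ⁅b 1 - b 2, b 0 + b 3⁆ = -b 3 by simp [sub_lie, lie_add, hbr]]
  exact (b.coord 0 - b.coord 3).notMem_span_pair (by simp) (by simp) (by simp)

include hΩ in
theorem orthogonal_span_sub_add :
    {x : 𝔤 | ∀ w ∈ span ℝ ({b 0 - b 3, b 1 + b 2} : Set 𝔤), Ω w x = 0} =
      span ℝ {b 1 - b 2, b 0 + b 3} := by
  ext X
  change (∀ w ∈ _, Ω.flip X w = 0) ↔ _
  rw [LinearMap.forall_mem_span_pair_eq_zero_iff, SetLike.mem_coe, mem_span_pair]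
  constructor
  · obtain ⟨x, rfl⟩ := b.equivFun.symm.surjective X
    rintro ⟨h1, h2⟩
    simp only [Basis.equivFun_symm_apply, Fin.sum_univ_four, Fin.isValue, map_add, map_smul,
      LinearMap.add_apply, LinearMap.smul_apply, LinearMap.flip_apply, map_sub, hΩ,
      Matrix.of_apply, Matrix.cons_val', Matrix.cons_val_zero, Matrix.cons_val_fin_one,
      Matrix.cons_val, Matrix.cons_val_one, smul_eq_mul, mul_zero, sub_neg_eq_add,
      zero_add, mul_one, add_zero, mul_neg] at h1 h2
    refine ⟨x 1, x 0, ?_⟩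
    simp only [Basis.equivFun_symm_apply, Fin.sum_univ_four, smul_add]
    rw [show x 2 = -x 1 by linarith, show x 3 = x 0 by linarith]
    module
  · rintro ⟨a, c, rfl⟩
    simp [hΩ]

end Filiform4

theorem stmt_8 (𝔤 : Type*) [LieRing 𝔤] [LieAlgebra ℝ 𝔤]
    (b : Module.Basis (Fin 4) ℝ 𝔤)
    (hbr : ∀ i k : Fin 4, ⁅b i, b k⁆ =
      if i = 0 ∧ k = 1 then b 3 else if i = 1 ∧ k = 0 then -(b 3) else
      if i = 0 ∧ k = 3 then b 2 else if i = 3 ∧ k = 0 then -(b 2) else 0)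
    (Ω : 𝔤 →ₗ[ℝ] 𝔤 →ₗ[ℝ] ℝ)
    (hΩ : ∀ i k : Fin 4, Ω (b i) (b k) =
      !![0,0,1,0; 0,0,0,1; -1,0,0,0; 0,-1,0,0] i k)
    (j : 𝔤 →ₗ[ℝ] 𝔤)
    (hj0 : j (b 0) = b 2) (hj1 : j (b 1) = b 3)
    (hj2 : j (b 2) = -(b 0)) (hj3 : j (b 3) = -(b 1)) :
    (∀ X : 𝔤, (∀ Y : 𝔤, Ω X Y = 0) → X = 0) ∧
    (∀ X Y Z : 𝔤, Ω ⁅X, Y⁆ Z + Ω ⁅Y, Z⁆ X + Ω ⁅Z, X⁆ Y = 0) ∧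
    (∀ X : 𝔤, j (j X) = -X) ∧
    (∀ X Y : 𝔤, Ω (j X) (j Y) = Ω X Y) ∧
    (∀ X : 𝔤, X ≠ 0 → 0 < Ω X (j X)) ∧
    Submodule.span ℝ {v : 𝔤 | ∃ X Y : 𝔤, v = algNijenhuis j X Y} =
      Submodule.span ℝ {b 0 - b 3, b 1 + b 2} ∧
    ¬ IsInvolutive (↑(Submodule.span ℝ ({b 0 - b 3, b 1 + b 2} : Set 𝔤)) : Set 𝔤) ∧
    {x : 𝔤 | ∀ w ∈ Submodule.span ℝ ({b 0 - b 3, b 1 + b 2} : Set 𝔤), Ω w x = 0} =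
      (↑(Submodule.span ℝ ({b 1 - b 2, b 0 + b 3} : Set 𝔤)) : Set 𝔤) ∧
    ¬ IsInvolutive (↑(Submodule.span ℝ ({b 1 - b 2, b 0 + b 3} : Set 𝔤)) : Set 𝔤) := by
  have hpos : ∀ X : 𝔤, X ≠ 0 → 0 < Ω X (j X) := fun X hX =>
    (Filiform4.apply_map_self_eq_sum_sq b hΩ hj0 hj1 hj2 hj3 X).symm ▸ b.sum_sq_equivFun_pos hX
  refine ⟨fun X hX => ?_, Filiform4.apply_lie_cyclic b hbr hΩ,
    Filiform4.map_map b hj0 hj1 hj2 hj3, Filiform4.apply_map_map b hΩ hj0 hj1 hj2 hj3, hpos,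
    Filiform4.span_algNijenhuis b hbr hj0 hj1 hj2 hj3,
    Filiform4.not_isInvolutive_span_sub_add b hbr, Filiform4.orthogonal_span_sub_add b hΩ,
    Filiform4.not_isInvolutive_orthogonal_span_sub_add b hbr⟩
  by_contra hX0
  exact (hpos X hX0).ne' (hX (j X))
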